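/- arXiv:1106.5462 — 8 statements merged into one kernel-verified Lean document; each statement's English description precedes it below -/
import Mathlib

section
/- Every feed vertex of a finite tournament has the second neighborhood property: if L = v₁v₂…vₙ is a linear ordering of the vertices of a tournament T satisfying the feedback property, then the last vertex vₙ satisfies |N⁺(vₙ)| ≤ |N⁺⁺(vₙ)|. -/
/-- First out-neighborhood of `v` in the digraph with arc relation `E`. -/
def Nplus {V : Type*} (E : V → V → Prop) (v : V) : Set V := {u | E v u}

/-- Second out-neighborhood: vertices at directed distance exactly 2 from `v`. -/
def Nplusplus {V : Type*} (E : V → V → Prop) (v : V) : Set V :=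
  {u | u ∉ Nplus E v ∧ u ≠ v ∧ ∃ w ∈ Nplus E v, E w u}

/-- `v` has the second neighborhood property. -/
def HasSNP {V : Type*} (E : V → V → Prop) (v : V) : Prop :=
  (Nplus E v).ncard ≤ (Nplusplus E v).ncard

/-- `{x, y}` is a missing edge of the digraph `E`. -/
def IsMissingEdge {V : Type*} (E : V → V → Prop) (x y : V) : Prop :=
  x ≠ y ∧ ¬ E x y ∧ ¬ E y x

/-- The ordered missing edge `(x₁, y₁)` loses to the ordered missing edge `(x₂, y₂)`. -/
def OLoses {V : Type*} (E : V → V → Prop) (x₁ y₁ x₂ y₂ : V) : Prop :=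
  E x₁ x₂ ∧ y₂ ∉ Nplus E x₁ ∪ Nplusplus E x₁ ∧
  E y₁ y₂ ∧ x₂ ∉ Nplus E y₁ ∪ Nplusplus E y₁

/-- The missing edge `{a, b}` loses to the missing edge `{c, d}`:
some ordering of the endpoints satisfies the ordered losing relation. -/
def Loses {V : Type*} (E : V → V → Prop) (a b c d : V) : Prop :=
  OLoses E a b c d ∨ OLoses E a b d c ∨ OLoses E b a c d ∨ OLoses E b a d c

/-- The missing edge `{a, b}` is good. -/
def Good {V : Type*} (E : V → V → Prop) (a b : V) : Prop :=
  (∀ v, v ≠ a → v ≠ b → E v a → b ∈ Nplus E v ∪ Nplusplus E v) ∨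
  (∀ v, v ≠ a → v ≠ b → E v b → a ∈ Nplus E v ∪ Nplusplus E v)

/-- Arc of the dependency digraph Δ: the missing edge `e` loses to the missing edge `f`. -/
def DeltaArc {V : Type*} (E : V → V → Prop) (e f : Sym2 V) : Prop :=
  ∃ a b c d : V, e = s(a, b) ∧ f = s(c, d) ∧
    IsMissingEdge E a b ∧ IsMissingEdge E c d ∧ OLoses E a b c d

section SNPAux

variable {V : Type*} {n : ℕ} (E : V → V → Prop) [DecidableRel E] (L : Fin (n + 1) ≃ V)

/-- Out-neighbors of the feed vertex among positions in the suffix `[i, n)`. -/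
def sufG (i : Fin (n + 1)) : Finset (Fin (n + 1)) :=
  Finset.univ.filter (fun k => i ≤ k ∧ k ≠ Fin.last n ∧ E (L (Fin.last n)) (L k))

/-- Suffix-witnessed second out-neighbors of the feed vertex in `[i, n)`. -/
def sufS (i : Fin (n + 1)) : Finset (Fin (n + 1)) :=
  Finset.univ.filter (fun k => i ≤ k ∧ k ≠ Fin.last n ∧ E (L k) (L (Fin.last n)) ∧
    ∃ w : Fin (n + 1), i ≤ w ∧ w ≠ Fin.last n ∧ E (L (Fin.last n)) (L w) ∧ E (L w) (L k))

/-- In-neighbors of the feed vertex among positions in the suffix `[i, n)`. -/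
def sufN (i : Fin (n + 1)) : Finset (Fin (n + 1)) :=
  Finset.univ.filter (fun k => i ≤ k ∧ k ≠ Fin.last n ∧ E (L k) (L (Fin.last n)))

theorem sufG_card_le_sufS_card
    (hasym : ∀ x y : V, E x y → ¬ E y x)
    (htotal : ∀ x y : V, x ≠ y → E x y ∨ E y x)
    (hfeedback : ∀ i j : Fin (n + 1), i ≤ j →
      (Finset.univ.filter
          (fun k : Fin (n + 1) => i ≤ k ∧ k ≤ j ∧ E (L k) (L i))).card ≤
        (Finset.univ.filter
          (fun k : Fin (n + 1) => i ≤ k ∧ k ≤ j ∧ E (L i) (L k))).card ∧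
      (Finset.univ.filter
          (fun k : Fin (n + 1) => i ≤ k ∧ k ≤ j ∧ E (L j) (L k))).card ≤
        (Finset.univ.filter
          (fun k : Fin (n + 1) => i ≤ k ∧ k ≤ j ∧ E (L k) (L j))).card) :
    ∀ d : ℕ, ∀ i : Fin (n + 1), n - i.val < d → (sufG E L i).card ≤ (sufS E L i).card := by
  have hirr : ∀ x : V, ¬ E x x := fun x h => hasym x x h h
  intro d
  induction d with
  | zero => intro i hi; omega
  | succ d ih =>
    intro i hi
    set f := L (Fin.last n) with hf
    -- the set of suffix-bad positions
    set Bad : Finset (Fin (n + 1)) := sufN E L i \ sufS E L i with hBad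
    rcases Finset.eq_empty_or_nonempty Bad with hB | hB
    · -- no bad vertex: feedback at the feed vertex on [i, last] suffices
      have hNS : sufN E L i ⊆ sufS E L i := by
        intro k hk
        by_contra hks
        have : k ∈ Bad := Finset.mem_sdiff.2 ⟨hk, hks⟩
        simp [hB] at this
      have hfb := (hfeedback i (Fin.last n) (Fin.le_last i)).2
      have hG : (Finset.univ.filter
          (fun k : Fin (n + 1) => i ≤ k ∧ k ≤ Fin.last n ∧ E f (L k))) = sufG E L i := by
        ext k
        simp only [sufG, Finset.mem_filter, Finset.mem_univ, true_and]
        constructor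
        · rintro ⟨h1, _, h3⟩
          refine ⟨h1, ?_, h3⟩
          rintro rfl; exact hirr f h3
        · rintro ⟨h1, _, h3⟩
          exact ⟨h1, Fin.le_last k, h3⟩
      have hN : (Finset.univ.filter
          (fun k : Fin (n + 1) => i ≤ k ∧ k ≤ Fin.last n ∧ E (L k) f)) = sufN E L i := by
        ext k
        simp only [sufN, Finset.mem_filter, Finset.mem_univ, true_and]
        constructor
        · rintro ⟨h1, _, h3⟩
          refine ⟨h1, ?_, h3⟩
          rintro rfl; exact hirr f h3
        · rintro ⟨h1, _, h3⟩
          exact ⟨h1, Fin.le_last k, h3⟩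
      calc (sufG E L i).card ≤ (sufN E L i).card := by rw [← hG, ← hN]; exact hfb
        _ ≤ (sufS E L i).card := Finset.card_le_card hNS
    · -- there is a bad vertex; take the earliest one, j
      obtain ⟨j, hjmem, hjmin⟩ : ∃ j ∈ Bad, ∀ k ∈ Bad, j ≤ k :=
        ⟨Bad.min' hB, Bad.min'_mem hB, fun k hk => Bad.min'_le k hk⟩
      have hjN : j ∈ sufN E L i := (Finset.mem_sdiff.1 hjmem).1
      have hjS : j ∉ sufS E L i := (Finset.mem_sdiff.1 hjmem).2
      simp only [sufN, Finset.mem_filter, Finset.mem_univ, true_and] at hjN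
      obtain ⟨hij, hjlast, hjf⟩ := hjN
      -- j has no suffix witness
      have hnowit : ∀ w : Fin (n + 1), i ≤ w → w ≠ Fin.last n → E f (L w) → ¬ E (L w) (L j) := by
        intro w h1 h2 h3 h4
        exact hjS (by
          simp only [sufS, Finset.mem_filter, Finset.mem_univ, true_and]
          exact ⟨hij, hjlast, hjf, w, h1, h2, h3, h4⟩)
      -- hence j dominates every suffix out-neighbor of f
      have hdom : ∀ k : Fin (n + 1), i ≤ k → k ≠ Fin.last n → E f (L k) → E (L j) (L k) := by
        intro k h1 h2 h3
        have hne : L k ≠ L j := by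
          intro h
          exact hasym _ _ hjf (h ▸ h3)
        rcases htotal (L j) (L k) (Ne.symm hne) with h | h
        · exact h
        · exact absurd h (hnowit k h1 h2 h3)
      have hjn : j.val < n := by
        have := j.isLt
        have : j.val ≠ n := fun h => hjlast (Fin.ext h)
        omega
      -- the successor position j'
      set j' : Fin (n + 1) := ⟨j.val + 1, by omega⟩ with hj'
      have hjj' : ∀ k : Fin (n + 1), j < k ↔ j' ≤ k := by
        intro k
        rw [Fin.lt_def, Fin.le_def]
        simp only [hj']
        omega
      -- prefix part: positions < j
      have hpre : ((sufG E L i).filter (· < j)).card ≤ ((sufS E L i).filter (· < j)).card := by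
        have hfb := (hfeedback i j hij).2
        have h1 : (sufG E L i).filter (· < j) ⊆
            Finset.univ.filter (fun k : Fin (n + 1) => i ≤ k ∧ k ≤ j ∧ E (L j) (L k)) := by
          intro k hk
          simp only [sufG, Finset.mem_filter, Finset.mem_univ, true_and] at hk ⊢
          obtain ⟨⟨hk1, hk2, hk3⟩, hk4⟩ := hk
          exact ⟨hk1, le_of_lt hk4, hdom k hk1 hk2 hk3⟩
        have h2 : Finset.univ.filter (fun k : Fin (n + 1) => i ≤ k ∧ k ≤ j ∧ E (L k) (L j)) ⊆
            (sufS E L i).filter (· < j) := by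
          intro k hk
          simp only [Finset.mem_filter, Finset.mem_univ, true_and] at hk
          obtain ⟨hk1, hk2, hk3⟩ := hk
          have hkj : k ≠ j := by
            rintro rfl; exact hirr _ hk3
          have hkltj : k < j := lt_of_le_of_ne hk2 hkj
          have hklast : k ≠ Fin.last n := by
            intro h
            have : j.val < k.val := by simp [h, Fin.last]; omega
            exact absurd (Fin.lt_def.1 hkltj) (by omega)
          have hLkf : L k ≠ f := fun h => hklast (L.injective h)
          have hnEfk : ¬ E f (L k) := by
            intro h
            exact hasym _ _ (hdom k hk1 hklast h) hk3
          have hEkf : E (L k) f := by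
            rcases htotal (L k) f hLkf with h | h
            · exact h
            · exact absurd h hnEfk
          have hkN : k ∈ sufN E L i := by
            simp only [sufN, Finset.mem_filter, Finset.mem_univ, true_and]
            exact ⟨hk1, hklast, hEkf⟩
          have hkS : k ∈ sufS E L i := by
            by_contra hns
            have : k ∈ Bad := Finset.mem_sdiff.2 ⟨hkN, hns⟩
            exact absurd hkltj (not_lt.2 (hjmin k this))
          exact Finset.mem_filter.2 ⟨hkS, hkltj⟩
        calc ((sufG E L i).filter (· < j)).card
            ≤ _ := Finset.card_le_card h1
          _ ≤ _ := hfb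
          _ ≤ ((sufS E L i).filter (· < j)).card := Finset.card_le_card h2
      -- suffix part: positions > j, via the induction hypothesis at j'
      have hsufG : (sufG E L i).filter (j < ·) = sufG E L j' := by
        ext k
        simp only [sufG, Finset.mem_filter, Finset.mem_univ, true_and]
        constructor
        · rintro ⟨⟨h1, h2, h3⟩, h4⟩
          exact ⟨(hjj' k).1 h4, h2, h3⟩
        · rintro ⟨h1, h2, h3⟩
          have hjk : j < k := (hjj' k).2 h1
          exact ⟨⟨le_trans hij (le_of_lt hjk), h2, h3⟩, hjk⟩
      have hsufS : sufS E L j' ⊆ (sufS E L i).filter (j < ·) := by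
        intro k hk
        simp only [sufS, Finset.mem_filter, Finset.mem_univ, true_and] at hk ⊢
        obtain ⟨h1, h2, h3, w, hw1, hw2, hw3, hw4⟩ := hk
        have hjk : j < k := (hjj' k).2 h1
        have hjw : j < w := (hjj' w).2 hw1
        exact ⟨⟨le_trans hij (le_of_lt hjk), h2, h3,
          w, le_trans hij (le_of_lt hjw), hw2, hw3, hw4⟩, hjk⟩
      have hih : (sufG E L j').card ≤ (sufS E L j').card := by
        apply ih
        simp [hj']
        omega
      have hsuf : ((sufG E L i).filter (j < ·)).card ≤ ((sufS E L i).filter (j < ·)).card := by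
        rw [hsufG]
        exact le_trans hih (Finset.card_le_card hsufS)
      -- split each set at j (j belongs to neither)
      have hsplit : ∀ X : Finset (Fin (n + 1)), j ∉ X →
          X.card = (X.filter (· < j)).card + (X.filter (j < ·)).card := by
        intro X hjX
        have hdisj : Disjoint (X.filter (· < j)) (X.filter (j < ·)) := by
          rw [Finset.disjoint_left]
          intro k hk1 hk2
          have h1 := (Finset.mem_filter.1 hk1).2
          have h2 := (Finset.mem_filter.1 hk2).2
          exact lt_asymm h1 h2
        have hunion : X.filter (· < j) ∪ X.filter (j < ·) = X := by
          ext k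
          simp only [Finset.mem_union, Finset.mem_filter]
          constructor
          · rintro (⟨h, _⟩ | ⟨h, _⟩) <;> exact h
          · intro hk
            rcases lt_trichotomy k j with h | h | h
            · exact Or.inl ⟨hk, h⟩
            · exact absurd (h ▸ hk) hjX
            · exact Or.inr ⟨hk, h⟩
        rw [← Finset.card_union_of_disjoint hdisj, hunion]
      have hjG : j ∉ sufG E L i := by
        simp only [sufG, Finset.mem_filter, Finset.mem_univ, true_and]
        rintro ⟨_, _, h⟩
        exact hasym _ _ hjf h
      rw [hsplit _ hjG, hsplit _ hjS]
      omega

end SNPAux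

/-- In a finite tournament, the last vertex (feed vertex) of any
ordering satisfying the feedback property has the second neighborhood property. -/
theorem feed_vertex_of_tournament_has_SNP {V : Type*} [Fintype V] {n : ℕ}
    (E : V → V → Prop) [DecidableRel E]
    (hasym : ∀ x y : V, E x y → ¬ E y x)
    (htotal : ∀ x y : V, x ≠ y → E x y ∨ E y x)
    (L : Fin (n + 1) ≃ V)
    (hfeedback : ∀ i j : Fin (n + 1), i ≤ j →
      (Finset.univ.filter
          (fun k : Fin (n + 1) => i ≤ k ∧ k ≤ j ∧ E (L k) (L i))).card ≤
        (Finset.univ.filter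
          (fun k : Fin (n + 1) => i ≤ k ∧ k ≤ j ∧ E (L i) (L k))).card ∧
      (Finset.univ.filter
          (fun k : Fin (n + 1) => i ≤ k ∧ k ≤ j ∧ E (L j) (L k))).card ≤
        (Finset.univ.filter
          (fun k : Fin (n + 1) => i ≤ k ∧ k ≤ j ∧ E (L k) (L j))).card) :
    HasSNP E (L (Fin.last n)) := by
  classical
  have hirr : ∀ x : V, ¬ E x x := fun x h => hasym x x h h
  set f := L (Fin.last n) with hf
  have hmain : (sufG E L 0).card ≤ (sufS E L 0).card :=
    sufG_card_le_sufS_card E L hasym htotal hfeedback (n + 1) 0 (by simp)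
  -- identify Nplus with the image of sufG 0
  have hGset : Nplus E f = ↑((sufG E L 0).image L) := by
    ext u
    simp only [Nplus, Set.mem_setOf_eq, Finset.coe_image, Set.mem_image, Finset.mem_coe,
      sufG, Finset.mem_filter, Finset.mem_univ, true_and]
    constructor
    · intro hu
      refine ⟨L.symm u, ⟨Fin.zero_le _, ?_, by rw [Equiv.apply_symm_apply]; exact hu⟩,
        Equiv.apply_symm_apply L u⟩
      intro h
      have : u = f := by rw [← Equiv.apply_symm_apply L u, h]
      exact hirr f (this ▸ hu)
    · rintro ⟨k, ⟨_, _, hk⟩, rfl⟩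
      exact hk
  have hScard : ↑((sufS E L 0).image L) ⊆ Nplusplus E f := by
    intro u hu
    simp only [Finset.coe_image, Set.mem_image, Finset.mem_coe, sufS, Finset.mem_filter,
      Finset.mem_univ, true_and] at hu
    obtain ⟨k, ⟨_, hklast, hkf, w, _, _, hw3, hw4⟩, rfl⟩ := hu
    refine ⟨fun h => hasym _ _ hkf h, ?_, L w, hw3, hw4⟩
    intro h
    exact hklast (L.injective h)
  have h1 : (Nplus E f).ncard = (sufG E L 0).card := by
    rw [hGset, Set.ncard_coe_finset, Finset.card_image_of_injective _ L.injective]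
  have h2 : (sufS E L 0).card ≤ (Nplusplus E f).ncard := by
    have := Set.ncard_le_ncard hScard (Set.toFinite _)
    rwa [Set.ncard_coe_finset, Finset.card_image_of_injective _ L.injective] at this
  unfold HasSNP
  omega
end

section
/- Let D be a finite digraph and let Δ be its dependency digraph. A missing edge {a,b} of D is good if and only if its in-degree in Δ is zero, i.e. no missing edge of D loses to {a,b}. -/
lemma good_symm_aux {V : Type*} (E : V → V → Prop) (a b : V) (h : Good E a b) :
    Good E b a :=
  h.elim (fun h => Or.inr fun v h1 h2 => h v h2 h1)
         (fun h => Or.inl fun v h1 h2 => h v h2 h1)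

lemma not_oloses_of_good {V : Type*} (E : V → V → Prop)
    (hasym : ∀ x y : V, E x y → ¬ E y x)
    (a b : V) (hab : IsMissingEdge E a b) (hg : Good E a b)
    (c d : V) : ¬ OLoses E c d a b := by
  rintro ⟨h1, h2, h3, h4⟩
  obtain ⟨hne, hEab, hEba⟩ := hab
  rcases hg with hg | hg
  · exact h2 (hg c (by rintro rfl; exact hasym _ _ h1 h1)
      (by rintro rfl; exact hEba h1) h1)
  · exact h4 (hg d (by rintro rfl; exact hEab h3)
      (by rintro rfl; exact hasym _ _ h3 h3) h3)

/-- A missing edge `{a, b}` is good iff its in-degree in the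
dependency digraph is zero, i.e. no missing edge loses to `{a, b}`. -/
theorem good_iff_indegree_zero {V : Type*} [Fintype V]
    (E : V → V → Prop)
    (hasym : ∀ x y : V, E x y → ¬ E y x)
    (a b : V) (hab : IsMissingEdge E a b) :
    Good E a b ↔ ¬ ∃ c d : V, IsMissingEdge E c d ∧ Loses E c d a b := by
  have hba : IsMissingEdge E b a := ⟨hab.1.symm, hab.2.2, hab.2.1⟩
  constructor
  · rintro hg ⟨c, d, hcd, hl⟩
    rcases hl with h | h | h | h
    · exact not_oloses_of_good E hasym a b hab hg c d h
    · exact not_oloses_of_good E hasym b a hba (good_symm_aux E a b hg) c d h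
    · exact not_oloses_of_good E hasym a b hab hg d c h
    · exact not_oloses_of_good E hasym b a hba (good_symm_aux E a b hg) d c h
  · intro h
    by_contra hng
    rw [Good] at hng
    push_neg at hng
    obtain ⟨h1, h2⟩ := hng
    obtain ⟨c, hca, hcb, hEca, hbc⟩ := h1
    obtain ⟨d, hda, hdb, hEdb, had⟩ := h2
    have hcd : c ≠ d := by
      rintro rfl
      exact hbc (Set.mem_union_left _ hEdb)
    have hEcd : ¬ E c d := fun hE =>
      hbc (Set.mem_union_right _ ⟨fun hm => hbc (Set.mem_union_left _ hm),
        Ne.symm hcb, d, hE, hEdb⟩)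
    have hEdc : ¬ E d c := fun hE =>
      had (Set.mem_union_right _ ⟨fun hm => had (Set.mem_union_left _ hm),
        Ne.symm hda, c, hE, hEca⟩)
    exact h ⟨c, d, ⟨hcd, hEcd, hEdc⟩, Or.inl ⟨hEca, hbc, hEdb, had⟩⟩
end

section
/- For every finite simple graph G there exists a finite digraph D whose missing graph is isomorphic to G (via an embedding of the vertices of G into the vertices of D carrying the edges of G exactly onto the missing edges of D) and whose dependency digraph has no arcs, i.e. no missing edge of D loses to another missing edge of D. -/
universe u

section Aux
variable {W : Type u} (G : SimpleGraph W) (r : W → W → Prop)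

/-- The digraph on three copies of `W`. -/
def myE : (W ⊕ W ⊕ W) → (W ⊕ W ⊕ W) → Prop
  | .inl v, .inl w => ¬ G.Adj v w ∧ r v w
  | .inl v, .inr (.inl u) => u = v
  | .inl _, .inr (.inr _) => True
  | .inr (.inl u), .inl w => u ≠ w
  | .inr (.inl u), .inr (.inl u') => r u u'
  | .inr (.inl _), .inr (.inr _) => False
  | .inr (.inr _), .inl _ => False
  | .inr (.inr _), .inr (.inl _) => True
  | .inr (.inr u), .inr (.inr u') => r u u'

theorem myE_noDigon (hasym : ∀ v w, r v w → ¬ r w v) :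
    ∀ x y, myE G r x y → ¬ myE G r y x := by
  intro x y hxy hyx
  rcases x with v | u | u <;> rcases y with w | w | w <;> simp [myE] at hxy hyx <;>
    first
      | exact hasym _ _ hxy.2 hyx.2
      | exact hasym _ _ hxy hyx
      | exact hyx hxy
      | exact hyx hxy.symm
      | exact hxy hyx

theorem myE_missing_iff (htot : ∀ v w : W, v ≠ w → r v w ∨ r w v) (v w : W) :
    G.Adj v w ↔ IsMissingEdge (myE G r) (Sum.inl v) (Sum.inl w) := by
  constructor
  · intro h
    refine ⟨by simp [h.ne], ?_, ?_⟩ <;> simp [myE, h, h.symm]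
  · rintro ⟨hne, h1, h2⟩
    have hvw : v ≠ w := by simpa using hne
    by_contra hadj
    rcases htot v w hvw with h | h
    · exact h1 ⟨hadj, h⟩
    · exact h2 ⟨fun h' => hadj h'.symm, h⟩

theorem myE_missing_only_inl (htot : ∀ v w : W, v ≠ w → r v w ∨ r w v)
    (x y : W ⊕ W ⊕ W) (h : IsMissingEdge (myE G r) x y) :
    ∃ v w : W, x = Sum.inl v ∧ y = Sum.inl w := by
  obtain ⟨hne, h1, h2⟩ := h
  rcases x with v | u | u <;> rcases y with w | w | w
  · exact ⟨v, w, rfl, rfl⟩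
  all_goals exfalso
  all_goals simp_all [myE]
  all_goals
    rcases htot u w (by intro h; subst h; simp at hne) with h | h
    · exact h1 h
    · exact h2 h

theorem myE_coverage (v : W) (z : W ⊕ W ⊕ W) (hz : z ≠ Sum.inl v) :
    z ∈ Nplus (myE G r) (Sum.inl v) ∪ Nplusplus (myE G r) (Sum.inl v) := by
  rcases z with w | u | u
  · have hvw : v ≠ w := fun h => hz (by rw [h])
    by_cases h : myE G r (Sum.inl v) (Sum.inl w)
    · exact Or.inl h
    · refine Or.inr ⟨h, hz, Sum.inr (Sum.inl v), ?_, ?_⟩ <;> simp [Nplus, myE, hvw]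
  · by_cases h : u = v
    · exact Or.inl (by simp [Nplus, myE, h])
    · refine Or.inr ⟨by simp [Nplus, myE, h], by simp, Sum.inr (Sum.inr v), ?_, ?_⟩ <;>
        simp [Nplus, myE]
  · exact Or.inl (by simp [Nplus, myE])

theorem myE_no_oloses (htot : ∀ v w : W, v ≠ w → r v w ∨ r w v) (x₁ y₁ x₂ y₂ : W ⊕ W ⊕ W)
    (h1 : IsMissingEdge (myE G r) x₁ y₁) (h2 : IsMissingEdge (myE G r) x₂ y₂) :
    ¬ OLoses (myE G r) x₁ y₁ x₂ y₂ := by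
  rintro ⟨hE1, hy2, hE2, hx2⟩
  obtain ⟨v, w, rfl, rfl⟩ := myE_missing_only_inl G r htot x₁ y₁ h1
  by_cases hxy : y₂ = Sum.inl v
  · subst hxy
    apply hx2
    by_cases hN : x₂ ∈ Nplus (myE G r) (Sum.inl w)
    · exact Or.inl hN
    · refine Or.inr ⟨hN, ?_, Sum.inl v, hE2, hE1⟩
      rintro rfl
      exact h1.2.1 hE1
  · exact hy2 (myE_coverage G r v y₂ hxy)

end Aux

/-- every finite simple graph is the missing graph of some finite
digraph whose dependency digraph has no arcs. -/
theorem exists_digraph_with_trivial_dependency {W : Type u} [Fintype W]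
    (G : SimpleGraph W) :
    ∃ (V : Type u) (_ : Fintype V) (E : V → V → Prop) (f : W ↪ V),
      (∀ x y : V, E x y → ¬ E y x) ∧
      (∀ u v : W, G.Adj u v ↔ IsMissingEdge E (f u) (f v)) ∧
      (∀ x y : V, IsMissingEdge E x y → ∃ u v : W, x = f u ∧ y = f v) ∧
      (∀ a b c d : V, IsMissingEdge E a b → IsMissingEdge E c d →
        ¬ Loses E a b c d) := by
  classical
  let e : W ≃ Fin (Fintype.card W) := Fintype.equivFin W
  set r : W → W → Prop := fun v w => e v < e w with hr
  have hasym : ∀ v w, r v w → ¬ r w v := fun v w h h' => absurd h' (not_lt.2 h.le)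
  have htot : ∀ v w : W, v ≠ w → r v w ∨ r w v := by
    intro v w hvw
    rcases lt_or_gt_of_ne (fun h : e v = e w => hvw (e.injective h)) with h | h
    · exact Or.inl h
    · exact Or.inr h
  refine ⟨W ⊕ W ⊕ W, inferInstance, myE G r, ⟨Sum.inl, Sum.inl_injective⟩, 
    myE_noDigon G r hasym, fun u v => myE_missing_iff G r htot u v, 
    fun x y h => by
      obtain ⟨u, v, h1, h2⟩ := myE_missing_only_inl G r htot x y h
      exact ⟨u, v, h1, h2⟩, ?_⟩
  intro a b c d hab hcd hl
  have hba : IsMissingEdge (myE G r) b a := ⟨hab.1.symm, hab.2.2, hab.2.1⟩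
  have hdc : IsMissingEdge (myE G r) d c := ⟨hcd.1.symm, hcd.2.2, hcd.2.1⟩
  rcases hl with h | h | h | h
  · exact myE_no_oloses G r htot a b c d hab hcd h
  · exact myE_no_oloses G r htot a b d c hab hdc h
  · exact myE_no_oloses G r htot b a c d hba hcd h
  · exact myE_no_oloses G r htot b a d c hba hdc h
end

section
/- Let D be a finite digraph whose missing graph is a star, i.e. all missing edges of D share a common endpoint. Then the dependency digraph of D is trivial: no missing edge of D loses to another missing edge of D. -/
/-- if the missing graph of a finite digraph is a star (all missing
edges share a common endpoint), then the dependency digraph is trivial. -/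
theorem dependency_trivial_of_star {V : Type*} [Fintype V]
    (E : V → V → Prop)
    (hasym : ∀ x y : V, E x y → ¬ E y x)
    (hstar : ∃ c : V, ∀ x y : V, IsMissingEdge E x y → x = c ∨ y = c) :
    ∀ a b c d : V, IsMissingEdge E a b → IsMissingEdge E c d →
      ¬ Loses E a b c d := by
  intro a b c d hab hcd hl
  obtain ⟨z, hz⟩ := hstar
  have irr : ∀ x, ¬ E x x := fun x h => hasym x x h h
  have key : ∀ p q r s : V, IsMissingEdge E p q → IsMissingEdge E r s →
      OLoses E p q r s → False := by
    rintro p q r s hpq hrs ⟨h1, -, h3, -⟩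
    rcases hz p q hpq with hp | hq
    · subst hp
      rcases hz r s hrs with hr | hs
      · subst hr; exact irr _ h1
      · subst hs; exact hpq.2.2 h3
    · subst hq
      rcases hz r s hrs with hr | hs
      · subst hr; exact hpq.2.1 h1
      · subst hs; exact irr _ h3
  have hba : IsMissingEdge E b a := ⟨hab.1.symm, hab.2.2, hab.2.1⟩
  have hdc : IsMissingEdge E d c := ⟨hcd.1.symm, hcd.2.2, hcd.2.1⟩
  rcases hl with h | h | h | h
  · exact key a b c d hab hcd h
  · exact key a b d c hab hdc h
  · exact key b a c d hba hcd h
  · exact key b a d c hba hdc h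
end

section
/- Let D be a finite digraph. If every missing edge of D is good, then D has a vertex v with the second neighborhood property, i.e. |N⁺(v)| ≤ |N⁺⁺(v)|. -/
/-!
Orient every missing edge `{a, b}` of `D` as an arc `a → b` that is good (adding it brings `b`
within distance two of no new vertex); this yields a tournament `T ⊇ D`. Let `f` be the last vertex
of a median order of `T`, i.e. an ordering with the maximum number of forward arcs, and let
`A` be its out-neighbourhood in `D`. Cut the order at the vertices that are neither in `A` nor receive a `T`-arc from `A`
(`f` is one of them). On each interval before such a cut vertex `r`, maximality says that `r` has
at most as many out-neighbours as in-neighbours; every vertex of `A` there is an out-neighbour of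
`r`, and every in-neighbour of `r` there receives an arc from `A`. Summing, `|A|` is at most the
number of vertices outside `A` receiving a `T`-arc from `A`, and goodness puts all of these into
`N⁺⁺(f)` in `D`.
-/

open Classical

theorem ncard_eq_countP_of_perm_univ_toList {V : Type*} [Fintype V] {l : List V}
    (hl : l.Perm Finset.univ.toList) (S : Set V) : S.ncard = l.countP (· ∈ S) := by
  rw [hl.countP_eq, ← Multiset.coe_countP, Finset.coe_toList, Multiset.countP_eq_card_filter,
    ← Finset.filter_val, Finset.card_val, Set.ncard_eq_toFinset_card']
  congr 1
  ext
  simp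

section MedianOrder

variable {V : Type*} (T : V → V → Prop)

noncomputable def forwardArcs : List V → ℕ
  | [] => 0
  | a :: s => s.countP (T a ·) + forwardArcs s

def IsMedianOrder (l : List V) : Prop :=
  ∀ l', l'.Perm l → forwardArcs T l' ≤ forwardArcs T l

def reachedFrom (A : Set V) : Set V :=
  {u | u ∉ A ∧ ∃ b ∈ A, T b u}

variable {T}

theorem forwardArcs_append_add_of_perm (A : List V) {s s' : List V} (h : s.Perm s') :
    forwardArcs T (A ++ s) + forwardArcs T s' = forwardArcs T (A ++ s') + forwardArcs T s := by
  induction A with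
  | nil => simp only [List.nil_append, Nat.add_comm]
  | cons a A ih =>
    simp only [List.cons_append, forwardArcs, ((h.append_left A).countP_eq _)]
    omega

theorem forwardArcs_append_cons_add (B : List V) (r : V) (C : List V) :
    forwardArcs T (B ++ r :: C) + B.countP (T r ·) =
      forwardArcs T (r :: (B ++ C)) + B.countP (T · r) := by
  induction B with
  | nil => rfl
  | cons b B ih =>
    simp only [List.cons_append, forwardArcs, List.countP_cons, List.countP_append] at ih ⊢
    omega

theorem exists_perm_isMedianOrder (l₀ : List V) : ∃ l, l.Perm l₀ ∧ IsMedianOrder T l := by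
  obtain ⟨l, hl, hmax⟩ := l₀.permutations.toFinset.exists_max_image (forwardArcs T)
    ⟨l₀, by simp⟩
  have hl₀ : l.Perm l₀ := by simpa using hl
  exact ⟨l, hl₀, fun l' h => hmax l' (by simpa using h.trans hl₀)⟩

/-- Moving `r` in front of `B` does not increase the number of forward arcs. -/
theorem IsMedianOrder.countP_le_countP {A B C : List V} {r : V}
    (h : IsMedianOrder T (A ++ B ++ r :: C)) : B.countP (T r ·) ≤ B.countP (T · r) := by
  have hperm : (A ++ r :: (B ++ C)).Perm (A ++ B ++ r :: C) := by
    simpa using (List.perm_middle.symm.append_left A)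
  have hle := h _ hperm
  have hA := forwardArcs_append_add_of_perm (T := T) A (List.perm_middle (l₁ := B) (a := r) (l₂ := C))
  have hmove := forwardArcs_append_cons_add (T := T) B r C
  simp only [List.append_assoc] at hle
  omega

variable {A : Set V}

theorem IsMedianOrder.countP_le_countP_reachedFrom_of_interval
    (htotal : ∀ x y, x ≠ y → T x y ∨ T y x) {p c q : List V} {r : V}
    (h : IsMedianOrder T (p ++ c ++ r :: q)) (hr : r ∉ A ∪ reachedFrom T A)
    (hc : ∀ x ∈ c, x ∈ A ∪ reachedFrom T A) :
    c.countP (· ∈ A) ≤ c.countP (· ∈ reachedFrom T A) := by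
  obtain ⟨hrA, hrR⟩ := not_or.mp hr
  calc c.countP (· ∈ A)
      ≤ c.countP (T r ·) := by
        refine List.countP_mono_left fun x _ hx => ?_
        have hxA : x ∈ A := by simpa using hx
        have hxr : x ≠ r := by rintro rfl; exact hrA hxA
        rcases htotal x r hxr with hxr | hrx
        · exact absurd ⟨hrA, x, hxA, hxr⟩ hrR
        · simpa using hrx
    _ ≤ c.countP (T · r) := h.countP_le_countP
    _ ≤ c.countP (· ∈ reachedFrom T A) := by
        refine List.countP_mono_left fun x hxc hx => ?_
        have hxA : x ∉ A := fun hxA => hrR ⟨hrA, x, hxA, by simpa using hx⟩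
        simpa [hxA] using hc x hxc

theorem IsMedianOrder.countP_le_countP_reachedFrom_of_prefix
    (htotal : ∀ x y, x ≠ y → T x y ∨ T y x) {p s q : List V} {r : V}
    (h : IsMedianOrder T (p ++ s ++ r :: q)) (hr : r ∉ A ∪ reachedFrom T A) :
    s.countP (· ∈ A) ≤ s.countP (· ∈ reachedFrom T A) := by
  -- `c` is the part of the current interval, between two vertices outside `A ∪ reachedFrom T A`,
  -- that has already been read.
  suffices ∀ p c, IsMedianOrder T (p ++ c ++ s ++ r :: q) → (∀ x ∈ c, x ∈ A ∪ reachedFrom T A) →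
      (c ++ s).countP (· ∈ A) ≤ (c ++ s).countP (· ∈ reachedFrom T A) from
    this p [] (by simpa using h) (by simp)
  clear h p
  induction s with
  | nil =>
    intro p c h hc
    simpa using IsMedianOrder.countP_le_countP_reachedFrom_of_interval htotal (p := p) (c := c)
      (by simpa using h) hr hc
  | cons x s ih =>
    intro p c h hc
    by_cases hx : x ∈ A ∪ reachedFrom T A
    · simpa using ih p (c ++ [x]) (by simpa using h) (by simpa [or_imp, forall_and] using ⟨hc, hx⟩)
    · have hchunk := IsMedianOrder.countP_le_countP_reachedFrom_of_interval htotal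
        (p := p) (c := c) (q := s ++ r :: q) (by simpa using h) hx hc
      have hrest := ih (p ++ c ++ [x]) [] (by simpa using h) (by simp)
      simp only [Set.mem_union, not_or] at hx
      simp only [List.nil_append] at hrest
      simp only [List.countP_append, List.countP_cons, hx.1, hx.2, decide_false]
      omega

theorem IsMedianOrder.ncard_le_ncard_reachedFrom [Fintype V]
    (htotal : ∀ x y, x ≠ y → T x y ∨ T y x) (hasymm : ∀ x y, T x y → ¬T y x) {m : List V} {f : V}
    (h : IsMedianOrder T (m ++ [f])) (hperm : (m ++ [f]).Perm Finset.univ.toList)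
    (hA : ∀ x ∈ A, T f x) : A.ncard ≤ (reachedFrom T A).ncard := by
  have hf : f ∉ A ∪ reachedFrom T A := by
    rintro (hfA | ⟨-, b, hbA, hbf⟩)
    · exact hasymm f f (hA f hfA) (hA f hfA)
    · exact hasymm f b (hA b hbA) hbf
  have hm := IsMedianOrder.countP_le_countP_reachedFrom_of_prefix htotal (p := []) (s := m) (q := [])
    (by simpa using h) hf
  simp only [Set.mem_union, not_or] at hf
  rw [ncard_eq_countP_of_perm_univ_toList hperm, ncard_eq_countP_of_perm_univ_toList hperm]
  simpa [List.countP_append, hf.1, hf.2] using hm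

end MedianOrder

section GoodCompletion

variable {V : Type*} (E : V → V → Prop)

/-- Adding the arc `a → b` to `E` brings `b` within distance two of no new vertex. -/
def GoodArc (a b : V) : Prop :=
  ∀ v, v ≠ a → v ≠ b → E v a → b ∈ Nplus E v ∪ Nplusplus E v

/-- A tournament extending `E`; the well-order only breaks ties between two good orientations. -/
def goodCompletion (a b : V) : Prop :=
  E a b ∨ (IsMissingEdge E a b ∧ GoodArc E a b ∧ (GoodArc E b a → WellOrderingRel a b))

variable {E}

theorem Good.goodArc_or_goodArc {a b : V} (h : Good E a b) : GoodArc E a b ∨ GoodArc E b a :=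
  h.imp id fun h v hva hvb => h v hvb hva

theorem goodCompletion_asymm (hasym : ∀ x y, E x y → ¬E y x) (a b : V) :
    goodCompletion E a b → ¬goodCompletion E b a := by
  rintro (hab | ⟨⟨-, hab, hba⟩, hgab, hwab⟩) (hba' | ⟨⟨-, -, hab'⟩, hgba, hwba⟩)
  · exact hasym a b hab hba'
  · exact hab' hab
  · exact hba hba'
  · exact asymm (hwab hgba) (hwba hgab)

theorem goodCompletion_total (hgood : ∀ a b, IsMissingEdge E a b → Good E a b) (a b : V)
    (hab : a ≠ b) : goodCompletion E a b ∨ goodCompletion E b a := by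
  by_cases hE : E a b
  · exact Or.inl (Or.inl hE)
  by_cases hE' : E b a
  · exact Or.inr (Or.inl hE')
  have hm : IsMissingEdge E a b := ⟨hab, hE, hE'⟩
  have hm' : IsMissingEdge E b a := ⟨hab.symm, hE', hE⟩
  by_cases hga : GoodArc E a b <;> by_cases hgb : GoodArc E b a
  · rcases (trichotomous_of WellOrderingRel a b).imp_right (Or.resolve_left · hab) with hw | hw
    · exact Or.inl (Or.inr ⟨hm, hga, fun _ => hw⟩)
    · exact Or.inr (Or.inr ⟨hm', hgb, fun _ => hw⟩)
  · exact Or.inl (Or.inr ⟨hm, hga, fun h => absurd h hgb⟩)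
  · exact Or.inr (Or.inr ⟨hm', hgb, fun h => absurd h hga⟩)
  · exact ((hgood a b hm).goodArc_or_goodArc.elim hga hgb).elim

theorem reachedFrom_goodCompletion_nplus_subset (hasym : ∀ x y, E x y → ¬E y x) (f : V) :
    reachedFrom (goodCompletion E) (Nplus E f) ⊆ Nplusplus E f := by
  rintro u ⟨hfu, b, hfb, hbu⟩
  have huf : u ≠ f := by
    rintro rfl
    exact goodCompletion_asymm hasym b u hbu (Or.inl hfb)
  rcases hbu with hbu | ⟨-, hgood, -⟩
  · exact ⟨hfu, huf, b, hfb, hbu⟩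
  · have hbf : f ≠ b := by
      rintro rfl
      exact hasym f f hfb hfb
    exact (hgood f hbf huf.symm hfb).resolve_left hfu

end GoodCompletion

/-- if every missing edge of a finite digraph is good, then the
digraph has a vertex with the second neighborhood property. -/
theorem snp_of_all_missing_edges_good {V : Type*} [Fintype V] [Nonempty V]
    (E : V → V → Prop)
    (hasym : ∀ x y : V, E x y → ¬ E y x)
    (hgood : ∀ a b : V, IsMissingEdge E a b → Good E a b) :
    ∃ v : V, HasSNP E v := by
  obtain ⟨l, hperm, hmed⟩ := exists_perm_isMedianOrder (T := goodCompletion E) Finset.univ.toList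
  obtain ⟨m, f, rfl⟩ : ∃ m f, l = m ++ [f] := by
    rcases l.eq_nil_or_concat with rfl | ⟨m, f, rfl⟩
    · obtain ⟨v⟩ := ‹Nonempty V›
      simpa using hperm.symm.subset (Finset.mem_toList.mpr (Finset.mem_univ v))
    · exact ⟨m, f, List.concat_eq_append⟩
  refine ⟨f, ?_⟩
  calc (Nplus E f).ncard
      ≤ (reachedFrom (goodCompletion E) (Nplus E f)).ncard :=
        hmed.ncard_le_ncard_reachedFrom (goodCompletion_total hgood) (goodCompletion_asymm hasym)
          hperm fun _ hx => Or.inl hx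
    _ ≤ (Nplusplus E f).ncard := Set.ncard_le_ncard (reachedFrom_goodCompletion_nplus_subset hasym f)
end

section
/- Let D be a finite digraph whose missing graph is a comb. Then in the dependency digraph Δ of D, every vertex (missing edge) has out-degree at most 1 and in-degree at most 1. -/
/-- The missing graph of the digraph `E` is the comb with parts `A`, `X`, `Y`. -/
def IsCombMissingGraph {V : Type*} (E : V → V → Prop) (A X Y : Set V) : Prop :=
  Disjoint A X ∧ Disjoint A Y ∧ Disjoint X Y ∧
  -- the induced subgraph on `X ∪ Y` is complete
  (∀ u ∈ X ∪ Y, ∀ v ∈ X ∪ Y, u ≠ v → IsMissingEdge E u v) ∧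
  -- `A` is a stable set
  (∀ a ∈ A, ∀ b ∈ A, ¬ IsMissingEdge E a b) ∧
  -- every vertex of `A` has a neighbor in `X`
  (∀ a ∈ A, ∃ x ∈ X, IsMissingEdge E a x) ∧
  -- every vertex of `A` has degree 1
  (∀ a ∈ A, ∀ x y : V, IsMissingEdge E a x → IsMissingEdge E a y → x = y) ∧
  -- `N(A) = X`
  (∀ x ∈ X, ∃ a ∈ A, IsMissingEdge E a x) ∧
  -- distinct vertices of `A` have disjoint neighborhoods
  (∀ a ∈ A, ∀ b ∈ A, a ≠ b → ∀ x : V, IsMissingEdge E a x → ¬ IsMissingEdge E b x) ∧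
  -- every missing edge is an edge of the comb
  (∀ u v : V, IsMissingEdge E u v →
    (u ∈ X ∪ Y ∧ v ∈ X ∪ Y) ∨ (u ∈ A ∧ v ∈ X) ∨ (u ∈ X ∧ v ∈ A)) ∧
  -- every vertex of the comb is incident to a missing edge
  (∀ v ∈ A ∪ X ∪ Y, ∃ u : V, IsMissingEdge E v u)

/-- If two distinct vertices do not form a missing edge, there is an arc between them. -/
lemma arc_of_not_missing {V : Type*} (E : V → V → Prop) {u v : V}
    (hne : u ≠ v) (h : ¬ IsMissingEdge E u v) : E u v ∨ E v u := by
  by_contra hc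
  push_neg at hc
  exact h ⟨hne, hc.1, hc.2⟩

/-- Membership in the second neighborhood from a directed path of length two. -/
lemma mem_npp {V : Type*} (E : V → V → Prop) {p q r : V}
    (h1 : E p q) (h2 : E q r) (h3 : ¬ E p r) (h4 : r ≠ p) :
    r ∈ Nplusplus E p :=
  ⟨h3, h4, q, h1, h2⟩

/-- Normal form of an arc of the dependency digraph when the missing graph is a comb:
both missing edges are pendant edges `{a, x}`, `{b, u}` with `a, b ∈ A`, `x, u ∈ X`,
and the losing conditions pair `a` with `u` and `x` with `b`. -/
lemma deltaArc_struct {V : Type*} {E : V → V → Prop}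
    (hasym : ∀ x y : V, E x y → ¬ E y x)
    {A X Y : Set V} (h : IsCombMissingGraph E A X Y)
    {e f : Sym2 V} (harc : DeltaArc E e f) :
    ∃ a x b u : V, a ∈ A ∧ x ∈ X ∧ b ∈ A ∧ u ∈ X ∧
      IsMissingEdge E a x ∧ IsMissingEdge E b u ∧
      e = s(a, x) ∧ f = s(b, u) ∧
      E a u ∧ E x b ∧
      b ∉ Nplus E a ∪ Nplusplus E a ∧ u ∉ Nplus E x ∪ Nplusplus E x := by
  obtain ⟨x₁, y₁, x₂, y₂, he, hf, hme, hmf, h1, h2, h3, h4⟩ := harc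
  obtain ⟨hAX, hAY, hXY, hcomp, hstab, hnbr, hdeg1, hNA, hdisj, hclass, hinc⟩ := h
  -- arcs leave `X ∪ Y`
  have key : ∀ p q : V, E p q → p ∈ X ∪ Y → q ∉ X ∪ Y := by
    intro p q hE hp hq
    have hpq : p ≠ q := by
      rintro rfl; exact hasym p p hE hE
    exact (hcomp p hp q hq hpq).2.1 hE
  rcases hclass x₁ y₁ hme with ⟨hx₁, hy₁⟩ | ⟨hx₁, hy₁⟩ | ⟨hx₁, hy₁⟩
  · -- impossible: both endpoints of `e` in `X ∪ Y`
    exfalso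
    have hx₂ : x₂ ∉ X ∪ Y := key x₁ x₂ h1 hx₁
    have hy₂ : y₂ ∉ X ∪ Y := key y₁ y₂ h3 hy₁
    rcases hclass x₂ y₂ hmf with ⟨h5, _⟩ | ⟨_, h5⟩ | ⟨h5, _⟩
    · exact hx₂ h5
    · exact hy₂ (Or.inl h5)
    · exact hx₂ (Or.inl h5)
  · -- `x₁ ∈ A`, `y₁ ∈ X`
    have hy₂ : y₂ ∉ X ∪ Y := key y₁ y₂ h3 (Or.inl hy₁)
    rcases hclass x₂ y₂ hmf with ⟨_, h5⟩ | ⟨_, h5⟩ | ⟨hx₂X, hy₂A⟩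
    · exact absurd h5 hy₂
    · exact absurd (Or.inl h5) hy₂
    · exact ⟨x₁, y₁, y₂, x₂, hx₁, hy₁, hy₂A, hx₂X, hme,
        ⟨hmf.1.symm, hmf.2.2, hmf.2.1⟩, he, hf.trans (Sym2.eq_swap), h1, h3, h2, h4⟩
  · -- `x₁ ∈ X`, `y₁ ∈ A`
    have hx₂ : x₂ ∉ X ∪ Y := key x₁ x₂ h1 (Or.inl hx₁)
    rcases hclass x₂ y₂ hmf with ⟨h5, _⟩ | ⟨hx₂A, hy₂X⟩ | ⟨h5, _⟩
    · exact absurd h5 hx₂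
    · exact ⟨y₁, x₁, x₂, y₂, hy₁, hx₁, hx₂A, hy₂X,
        ⟨hme.1.symm, hme.2.2, hme.2.1⟩, hmf, he.trans (Sym2.eq_swap), hf, h3, h1, h4, h2⟩
    · exact absurd (Or.inl h5) hx₂

/-- if the missing graph of a finite digraph is a comb, then every
vertex of the dependency digraph has out-degree at most 1 and in-degree at most 1. -/
theorem comb_dependency_degrees_le_one {V : Type*} [Fintype V]
    (E : V → V → Prop)
    (hasym : ∀ x y : V, E x y → ¬ E y x)
    (hcomb : ∃ A X Y : Set V, IsCombMissingGraph E A X Y) :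
    (∀ e f g : Sym2 V, DeltaArc E e f → DeltaArc E e g → f = g) ∧
    (∀ e f g : Sym2 V, DeltaArc E f e → DeltaArc E g e → f = g) := by
  obtain ⟨A, X, Y, hc⟩ := hcomb
  obtain ⟨hAX, hAY, hXY, hcomp, hstab, hnbr, hdeg1, hNA, hdisj, hclass, hinc⟩ := hc
  have hc' : IsCombMissingGraph E A X Y :=
    ⟨hAX, hAY, hXY, hcomp, hstab, hnbr, hdeg1, hNA, hdisj, hclass, hinc⟩
  constructor
  · -- out-degree at most one
    intro e f g hf hg
    obtain ⟨a, x, b, u, haA, hxX, hbA, huX, hax, hbu, he, hfeq, hEau, hExb, hbN, huN⟩ :=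
      deltaArc_struct hasym hc' hf
    obtain ⟨a', x', b', u', ha'A, hx'X, hb'A, hu'X, hax', hbu', he', hgeq, hEau', hExb',
      hbN', huN'⟩ := deltaArc_struct hasym hc' hg
    have heq : s(a, x) = s(a', x') := he.symm.trans he'
    rw [Sym2.eq_iff] at heq
    rcases heq with ⟨rfl, rfl⟩ | ⟨rfl, rfl⟩
    swap
    · exact absurd hx'X (Set.disjoint_left.mp hAX haA)
    have hbnea : b ≠ a := fun hh => hax.2.2 (hh ▸ hExb)
    have hb'nea : b' ≠ a := fun hh => hax.2.2 (hh ▸ hExb')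
    by_cases hbb' : b = b'
    · subst hbb'
      have huu' : u = u' := hdeg1 b hbA u u' hbu hbu'
      rw [hfeq, hgeq, huu']
    · exfalso
      have huu' : u ≠ u' := by
        intro hh
        exact hdisj b hbA b' hb'A hbb' u hbu (by rw [hh]; exact hbu')
      have hnm : ¬ IsMissingEdge E b' u := by
        intro hm
        exact huu' (hdeg1 b' hb'A u u' hm hbu')
      have hne : u ≠ b' := by
        intro hh
        exact (Set.disjoint_left.mp hAX hb'A) (hh ▸ huX)
      rcases arc_of_not_missing E hne (fun hm => hnm ⟨hm.1.symm, hm.2.2, hm.2.1⟩) with hcc | hcc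
      · -- E u b' puts b' into the second neighborhood of a
        have : b' ∈ Nplusplus E a :=
          mem_npp E hEau hcc (fun hE => hbN' (Set.mem_union_left _ hE)) hb'nea
        exact hbN' (Set.mem_union_right _ this)
      · -- E b' u puts u into the second neighborhood of x
        have hunx : u ≠ x := by
          intro hh
          exact hdisj b hbA a haA hbnea u hbu (by rw [hh]; exact hax)
        have : u ∈ Nplusplus E x :=
          mem_npp E hExb' hcc (fun hE => huN (Set.mem_union_left _ hE)) hunx
        exact huN (Set.mem_union_right _ this)
  · -- in-degree at most one
    intro e f g hf hg
    obtain ⟨a, x, b, u, haA, hxX, hbA, huX, hax, hbu, hfeq, he, hEau, hExb, hbN, huN⟩ :=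
      deltaArc_struct hasym hc' hf
    obtain ⟨a', x', b', u', ha'A, hx'X, hb'A, hu'X, hax', hbu', hgeq, he', hEau', hExb',
      hbN', huN'⟩ := deltaArc_struct hasym hc' hg
    have heq : s(b, u) = s(b', u') := he.symm.trans he'
    rw [Sym2.eq_iff] at heq
    rcases heq with ⟨rfl, rfl⟩ | ⟨rfl, rfl⟩
    swap
    · exact absurd hu'X (Set.disjoint_left.mp hAX hbA)
    by_cases haa' : a = a'
    · subst haa'
      have hxx' : x = x' := hdeg1 a haA x x' hax hax'
      rw [hfeq, hgeq, hxx']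
    · exfalso
      have hbnea : b ≠ a := fun hh => hax.2.2 (hh ▸ hExb)
      have hbnea' : b ≠ a' := fun hh => hax'.2.2 (hh ▸ hExb')
      have hunx : u ≠ x := by
        intro hh
        exact hdisj b hbA a haA hbnea u hbu (by rw [hh]; exact hax)
      have hxnea' : x ≠ a' := by
        intro hh
        exact (Set.disjoint_left.mp hAX ha'A) (hh ▸ hxX)
      have hnm : ¬ IsMissingEdge E x a' := by
        intro hm
        exact hdisj a haA a' ha'A haa' x hax ⟨hm.1.symm, hm.2.2, hm.2.1⟩
      rcases arc_of_not_missing E hxnea' hnm with hcc | hcc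
      · -- E x a', followed by E a' u, puts u into the second neighborhood of x
        have : u ∈ Nplusplus E x :=
          mem_npp E hcc hEau' (fun hE => huN (Set.mem_union_left _ hE)) hunx
        exact huN (Set.mem_union_right _ this)
      · -- E a' x, followed by E x b, puts b into the second neighborhood of a'
        have : b ∈ Nplusplus E a' :=
          mem_npp E hcc hExb (fun hE => hbN' (Set.mem_union_left _ hE)) hbnea'
        exact hbN' (Set.mem_union_right _ this)
end

section
/- Let D be a finite digraph whose missing graph is a comb. Then the dependency digraph Δ of D contains no directed cycle; consequently (since every vertex of Δ has in-degree and out-degree at most 1) Δ is a disjoint union of directed paths. -/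
section Aux
variable {V : Type*} {E : V → V → Prop}

lemma oloses_swap {x₁ y₁ x₂ y₂ : V} (h : OLoses E x₁ y₁ x₂ y₂) : OLoses E y₁ x₁ y₂ x₂ :=
  ⟨h.2.2.1, h.2.2.2, h.1, h.2.1⟩

lemma isMissingEdge_symm {x y : V} (h : IsMissingEdge E x y) : IsMissingEdge E y x :=
  ⟨h.1.symm, h.2.2, h.2.1⟩

lemma nn_not_left {a c : V} (h : c ∉ Nplus E a ∪ Nplusplus E a) : ¬ E a c :=
  fun hh => h (Set.mem_union_left _ hh)

lemma nn_not_two {a c w : V} (h : c ∉ Nplus E a ∪ Nplusplus E a) (hca : c ≠ a)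
    (hw : E a w) (hwc : E w c) : False :=
  h (Set.mem_union_right _ ⟨fun h' => h (Set.mem_union_left _ h'), hca, w, hw, hwc⟩)

lemma pend_eq {A X : Set V} (hAX : Disjoint A X) {a x b y : V}
    (ha : a ∈ A) (hx : x ∈ X) (hb : b ∈ A) (hy : y ∈ X)
    (h : s(a, x) = s(b, y)) : a = b ∧ x = y := by
  rcases Sym2.eq_iff.mp h with ⟨h1, h2⟩ | ⟨h1, h2⟩
  · exact ⟨h1, h2⟩
  · exact absurd hy (Set.disjoint_left.mp hAX (h1 ▸ ha))

lemma deltaArc_structure {A X Y : Set V}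
    (hasym : ∀ x y : V, E x y → ¬ E y x)
    (hc : IsCombMissingGraph E A X Y) {e f : Sym2 V} (h : DeltaArc E e f) :
    ∃ a x a' x', e = s(a, x) ∧ f = s(a', x') ∧
      a ∈ A ∧ x ∈ X ∧ a' ∈ A ∧ x' ∈ X ∧
      IsMissingEdge E a x ∧ IsMissingEdge E a' x' ∧ OLoses E a x x' a' := by
  obtain ⟨hAX, hAY, hXY, hcomp, hstab, hAnbr, hdeg1, hNAX, hdisj, hclass, hcov⟩ := hc
  obtain ⟨u1, v1, u2, v2, he, hf, m1, m2, ho⟩ := h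
  have hirr : ∀ v : V, ¬ E v v := fun v hv => hasym v v hv hv
  have hXYarc : ∀ p q : V, p ∈ X ∪ Y → q ∈ X ∪ Y → ¬ E p q := by
    intro p q hp hq hpq
    rcases eq_or_ne p q with rfl | hne
    · exact hirr p hpq
    · exact (hcomp p hp q hq hne).2.1 hpq
  by_cases hu1 : u1 ∈ A
  · have hv1 : v1 ∈ X := by
      rcases hclass u1 v1 m1 with ⟨h1, _⟩ | ⟨_, h2⟩ | ⟨h1, _⟩
      · rcases h1 with h1 | h1
        · exact absurd h1 (Set.disjoint_left.mp hAX hu1)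
        · exact absurd h1 (Set.disjoint_left.mp hAY hu1)
      · exact h2
      · exact absurd h1 (Set.disjoint_left.mp hAX hu1)
    have hv2 : v2 ∉ X ∪ Y := fun hv2 => hXYarc v1 v2 (Or.inl hv1) hv2 ho.2.2.1
    have hv2A : v2 ∈ A ∧ u2 ∈ X := by
      rcases hclass v2 u2 (isMissingEdge_symm m2) with ⟨h1, _⟩ | ⟨h1, h2⟩ | ⟨h1, _⟩
      · exact absurd h1 hv2
      · exact ⟨h1, h2⟩
      · exact absurd (Or.inl h1) hv2
    exact ⟨u1, v1, v2, u2, he, hf.trans (Sym2.eq_swap), hu1, hv1, hv2A.1, hv2A.2, m1,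
      isMissingEdge_symm m2, ho⟩
  · have hu1XY : u1 ∈ X ∪ Y := by
      rcases hclass u1 v1 m1 with ⟨h1, _⟩ | ⟨h1, _⟩ | ⟨h1, _⟩
      · exact h1
      · exact absurd h1 hu1
      · exact Or.inl h1
    have hu2A : u2 ∈ A ∧ v2 ∈ X := by
      rcases hclass u2 v2 m2 with ⟨h1, _⟩ | ⟨h1, h2⟩ | ⟨h1, _⟩
      · exact absurd ho.1 (hXYarc u1 u2 hu1XY h1)
      · exact ⟨h1, h2⟩
      · exact absurd ho.1 (hXYarc u1 u2 hu1XY (Or.inl h1))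
    have hv1A : v1 ∈ A ∧ u1 ∈ X := by
      have hv1 : v1 ∉ X ∪ Y := fun hv1 => hXYarc v1 v2 hv1 (Or.inl hu2A.2) ho.2.2.1
      rcases hclass u1 v1 m1 with ⟨_, h2⟩ | ⟨h1, _⟩ | ⟨h1, h2⟩
      · exact absurd h2 hv1
      · exact absurd h1 hu1
      · exact ⟨h2, h1⟩
    exact ⟨v1, u1, u2, v2, he.trans Sym2.eq_swap, hf, hv1A.1, hv1A.2, hu2A.1, hu2A.2,
      isMissingEdge_symm m1, m2, oloses_swap ho⟩

end Aux

/-- if the missing graph of a finite digraph is a comb, then the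
dependency digraph has no directed cycle; together with the in- and out-degree
bounds it is a disjoint union of directed paths. -/
theorem comb_dependency_is_disjoint_union_of_paths {V : Type*} [Fintype V]
    (E : V → V → Prop)
    (hasym : ∀ x y : V, E x y → ¬ E y x)
    (hcomb : ∃ A X Y : Set V, IsCombMissingGraph E A X Y) :
    (¬ ∃ e : Sym2 V, Relation.TransGen (DeltaArc E) e e) ∧
    (∀ e f g : Sym2 V, DeltaArc E e f → DeltaArc E e g → f = g) ∧
    (∀ e f g : Sym2 V, DeltaArc E f e → DeltaArc E g e → f = g) := by
  obtain ⟨A, X, Y, hc⟩ := hcomb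
  have hc' := hc
  obtain ⟨hAX, hAY, hXY, hcomp, hstab, hAnbr, hdeg1, hNAX, hdisj, hclass, hcov⟩ := hc'
  have hirr : ∀ v : V, ¬ E v v := fun v hv => hasym v v hv hv
  -- uniqueness of the edge an edge loses to
  have out_unique : ∀ a x a' x' a'' x'' : V, a ∈ A → x ∈ X → a' ∈ A → x' ∈ X → a'' ∈ A →
      IsMissingEdge E a x → IsMissingEdge E a' x' → IsMissingEdge E a'' x'' →
      OLoses E a x x' a' → OLoses E a x x'' a'' → a' = a'' ∧ x' = x'' := by
    intro a x a' x' a'' x'' haA hxX ha'A hx'X ha''A ma m' m'' h1 h2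
    by_cases haa : a' = a''
    · subst haa
      exact ⟨rfl, hdeg1 a' ha'A x' x'' m' m''⟩
    · exfalso
      have hxne : x' ≠ x'' := by
        intro hh; subst hh
        exact hdisj a' ha'A a'' ha''A haa x' m' m''
      have ha''a : a'' ≠ a := by
        intro hh; subst hh
        exact ma.2.2 h2.2.2.1
      have hn1 : ¬ E x' a'' := fun hh => nn_not_two h2.2.1 ha''a h1.1 hh
      have hax : x' ≠ a'' := fun hh => (Set.disjoint_left.mp hAX ha''A) (hh ▸ hx'X)
      have hEx : E a'' x' := by
        by_contra hn2
        exact hxne (hdeg1 a'' ha''A x' x'' ⟨Ne.symm hax, hn2, hn1⟩ m'')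
      have hx'x : x' ≠ x := by
        intro hh; subst hh
        exact ma.2.1 h1.1
      exact nn_not_two h1.2.2.2 hx'x h2.2.2.1 hEx
  -- uniqueness of the edge that loses to a given edge
  have in_unique : ∀ a x b y a' x' : V, a ∈ A → b ∈ A → y ∈ X → x' ∈ X →
      IsMissingEdge E a x → IsMissingEdge E b y → IsMissingEdge E a' x' →
      OLoses E a x x' a' → OLoses E b y x' a' → a = b ∧ x = y := by
    intro a x b y a' x' haA hbA hyX hx'X ma mb m' h1 h2
    by_cases hab : a = b
    · subst hab
      exact ⟨rfl, hdeg1 a haA x y ma mb⟩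
    · exfalso
      have ha'a : a' ≠ a := by
        intro hh; subst hh
        have hxx : x' = x := hdeg1 a' haA x' x m' ma
        exact ma.2.1 (hxx ▸ h1.1)
      have hx'y : x' ≠ y := by
        intro hh; subst hh
        exact mb.2.1 h2.1
      have hay : a ≠ y := fun hh => Set.disjoint_left.mp hAX haA (hh ▸ hyX)
      have hnm : ¬ IsMissingEdge E a y := fun hm => hdisj a haA b hbA hab y hm mb
      by_cases hE : E a y
      · exact nn_not_two h1.2.1 ha'a hE h2.2.2.1
      · have hE2 : E y a := by
          by_contra hE2
          exact hnm ⟨hay, hE, hE2⟩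
        exact nn_not_two h2.2.2.2 hx'y hE2 h1.1
  refine ⟨?_, ?_, ?_⟩
  · -- acyclicity
    rintro ⟨e, hcyc⟩
    have key : ∀ f : Sym2 V, Relation.TransGen (DeltaArc E) e f →
        ∃ a x a' x', e = s(a, x) ∧ f = s(a', x') ∧
          a ∈ A ∧ x ∈ X ∧ a' ∈ A ∧ x' ∈ X ∧
          IsMissingEdge E a x ∧ IsMissingEdge E a' x' ∧ E a' a := by
      intro f h
      induction h with
      | single harc =>
          obtain ⟨a, x, a', x', he, hf, haA, hxX, ha'A, hx'X, ma, m', ho⟩ :=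
            deltaArc_structure hasym hc harc
          have hne : a' ≠ a := by
            intro hh; subst hh
            exact ma.2.2 ho.2.2.1
          have hEa : E a' a := by
            by_contra hE
            exact hstab a haA a' ha'A ⟨hne.symm, nn_not_left ho.2.1, hE⟩
          exact ⟨a, x, a', x', he, hf, haA, hxX, ha'A, hx'X, ma, m', hEa⟩
      | tail hpath harc ih =>
          obtain ⟨a, x, b, y, he, hf, haA, hxX, hbA, hyX, ma, mb, hba⟩ := ih
          obtain ⟨b2, y2, c, z, hf2, hg, hb2A, hy2X, hcA, hzX, mb2, mc, ho⟩ :=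
            deltaArc_structure hasym hc harc
          obtain ⟨hbb, hyy⟩ := pend_eq hAX hb2A hy2X hbA hyX (hf2.symm.trans hf)
          subst hbb; subst hyy
          have hcb : c ≠ b2 := by
            intro hh; subst hh
            exact mb.2.2 ho.2.2.1
          have hca : c ≠ a := by
            intro hh; subst hh
            exact nn_not_left ho.2.1 hba
          have hnac : ¬ E a c := fun hh => nn_not_two ho.2.1 hcb hba hh
          have hEc : E c a := by
            by_contra hE
            exact hstab a haA c hcA ⟨hca.symm, hnac, hE⟩
          exact ⟨a, x, c, z, he, hg, haA, hxX, hcA, hzX, ma, mc, hEc⟩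
    obtain ⟨a, x, a', x', he, he', haA, hxX, ha'A, hx'X, ma, m', hEa⟩ := key e hcyc
    obtain ⟨haa, -⟩ := pend_eq hAX ha'A hx'X haA hxX (he'.symm.trans he)
    exact hirr a (haa ▸ hEa)
  · intro e f g hf hg
    obtain ⟨a, x, a', x', he, hf', haA, hxX, ha'A, hx'X, ma, m', ho⟩ :=
      deltaArc_structure hasym hc hf
    obtain ⟨b, y, a'', x'', he2, hg', hbA, hyX, ha''A, hx''X, mb, m'', ho2⟩ :=
      deltaArc_structure hasym hc hg
    obtain ⟨hab, hxy⟩ := pend_eq hAX hbA hyX haA hxX (he2.symm.trans he)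
    subst hab; subst hxy
    obtain ⟨h1, h2⟩ := out_unique b y a' x' a'' x'' hbA hyX ha'A hx'X ha''A mb m' m'' ho ho2
    rw [hf', hg', h1, h2]
  · intro e f g hf hg
    obtain ⟨a, x, a', x', hfe, he', haA, hxX, ha'A, hx'X, ma, m', ho⟩ :=
      deltaArc_structure hasym hc hf
    obtain ⟨b, y, a'', x'', hge, he2, hbA, hyX, ha''A, hx''X, mb, m'', ho2⟩ :=
      deltaArc_structure hasym hc hg
    obtain ⟨hab, hxy⟩ := pend_eq hAX ha''A hx''X ha'A hx'X (he2.symm.trans he')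
    subst hab; subst hxy
    obtain ⟨h1, h2⟩ := in_unique a x b y a'' x'' haA hbA hyX hx''X ma mb m'' ho ho2
    rw [hfe, hge, h1, h2]
end

section
/- Let D be a finite digraph whose missing graph is a K̃⁴, i.e. a complete graph minus two edges with no common endpoint. Then the dependency digraph Δ of D has at most one arc. -/
/-- The missing graph of `E` is the complete graph on `S` minus the two
independent edges `{x, y}` and `{u, v}` (a `K̃⁴`). -/
def IsK4TildeMissingGraph {V : Type*} (E : V → V → Prop)
    (S : Set V) (x y u v : V) : Prop :=
  x ∈ S ∧ y ∈ S ∧ u ∈ S ∧ v ∈ S ∧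
  x ≠ y ∧ x ≠ u ∧ x ≠ v ∧ y ≠ u ∧ y ≠ v ∧ u ≠ v ∧
  ∀ a b : V, IsMissingEdge E a b ↔
    (a ∈ S ∧ b ∈ S ∧ a ≠ b ∧ s(a, b) ≠ s(x, y) ∧ s(a, b) ≠ s(u, v))

/-- if the missing graph of a finite digraph is a `K̃⁴`, then its
dependency digraph has at most one arc. -/
theorem k4tilde_dependency_at_most_one_arc {V : Type*} [Fintype V]
    (E : V → V → Prop)
    (hasym : ∀ x y : V, E x y → ¬ E y x)
    (hK4 : ∃ (S : Set V) (x y u v : V), IsK4TildeMissingGraph E S x y u v) :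
    {p : Sym2 V × Sym2 V | DeltaArc E p.1 p.2}.ncard ≤ 1 := by
  obtain ⟨S, x, y, u, v, hxS, hyS, huS, hvS, hxy, hxu, hxv, hyu, hyv, huv, hiff⟩ := hK4
  have hirr : ∀ a : V, ¬ E a a := fun a h => hasym a a h h
  have pair : ∀ a c : V, a ∈ S → c ∈ S → E a c →
      s(a, c) = s(x, y) ∨ s(a, c) = s(u, v) := by
    intro a c haS hcS h
    have hne : a ≠ c := by rintro rfl; exact hirr a h
    by_contra hcon
    push_neg at hcon
    exact ((hiff a c).mpr ⟨haS, hcS, hne, hcon.1, hcon.2⟩).2.1 h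
  have shape : ∀ e f : Sym2 V, DeltaArc E e f →
      (E x y ∧ E u v ∧ e = s(x, u) ∧ f = s(y, v)) ∨
      (E x y ∧ E v u ∧ e = s(x, v) ∧ f = s(y, u)) ∨
      (E y x ∧ E u v ∧ e = s(y, u) ∧ f = s(x, v)) ∨
      (E y x ∧ E v u ∧ e = s(y, v) ∧ f = s(x, u)) := by
    rintro e f ⟨a, b, c, d, rfl, rfl, hab, hcd, hac, -, hbd, -⟩
    obtain ⟨haS, hbS, hab', h1, h2⟩ := (hiff a b).mp hab
    obtain ⟨hcS, hdS, hcd', h3, h4⟩ := (hiff c d).mp hcd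
    have pac := pair a c haS hcS hac
    have pbd := pair b d hbS hdS hbd
    simp only [Sym2.eq_iff] at pac pbd
    rcases pac with (⟨rfl, rfl⟩ | ⟨rfl, rfl⟩) | (⟨rfl, rfl⟩ | ⟨rfl, rfl⟩) <;>
      rcases pbd with (⟨rfl, rfl⟩ | ⟨rfl, rfl⟩) | (⟨rfl, rfl⟩ | ⟨rfl, rfl⟩) <;>
      simp_all [Sym2.eq_iff]
  have hsub : {p : Sym2 V × Sym2 V | DeltaArc E p.1 p.2}.Subsingleton := by
    rintro ⟨e1, f1⟩ hp ⟨e2, f2⟩ hq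
    have H1 := hasym x y
    have H2 := hasym u v
    rcases shape e1 f1 hp with ⟨a1, a2, rfl, rfl⟩ | ⟨a1, a2, rfl, rfl⟩ | ⟨a1, a2, rfl, rfl⟩ | ⟨a1, a2, rfl, rfl⟩ <;>
      rcases shape e2 f2 hq with ⟨b1, b2, rfl, rfl⟩ | ⟨b1, b2, rfl, rfl⟩ | ⟨b1, b2, rfl, rfl⟩ | ⟨b1, b2, rfl, rfl⟩ <;>
      first
        | rfl
        | exact absurd b1 (hasym _ _ a1)
        | exact absurd b2 (hasym _ _ a2)
  rcases hsub.eq_empty_or_singleton with h | ⟨p, h⟩ <;> simp [h]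
end
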